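/- arXiv:1710.01870 — 3 statements merged into one kernel-verified Lean document; each statement's English description precedes it below -/
import Mathlib

section
/- (Finite-set criterion for <₁.) Let α < β be ordinals. Suppose that for all finite sets X ⊆ α and Y ⊆ [α, β) there exists a finite set Ỹ ⊆ α with X < Ỹ and an isomorphism h : X ∪ Ỹ → X ∪ Y (as substructures of R₂) fixing X pointwise and mapping Ỹ onto Y. Then α <₁ β. -/
/-
A Σ₁-witness in `β` involves only finitely many ordinals: the values of the terms of the formula.
Those below `α` form `X`, the others a finite `Y ⊆ [α, β)`. The criterion yields a copy of `X ∪ Y`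
inside `α` over `X`, and since a quantifier-free formula only sees the atomic relations between its
term values, pulling the witness back along the inverse isomorphism gives a witness below `α`.
Variables not occurring in the formula are sent to `0`, which lies below `α` because the criterion
applied to `Y = {α}` forces `0 < α`.
-/

open Ordinal

noncomputable section

/-- The least epsilon number: the least fixed point of `ξ ↦ ω ^ ξ`. -/
def eps0 : Ordinal := sInf {ξ : Ordinal | Ordinal.omega0 ^ ξ = ξ}

namespace R2

/-- Terms of the language `{≤, ≤₁, ≤₂}`: existentially quantified variables,
universally quantified variables, and parameters (ordinal constants). -/
inductive Trm : Type 1 where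
  | evar : ℕ → Trm
  | avar : ℕ → Trm
  | cst  : Ordinal → Trm

def Trm.val (v w : ℕ → Ordinal) : Trm → Ordinal
  | .evar n => v n
  | .avar n => w n
  | .cst c  => c

/-- Quantifier-free formulas in the language `{≤, ≤₁, ≤₂}`. -/
inductive QF : Type 1 where
  | le  : Trm → Trm → QF
  | le1 : Trm → Trm → QF
  | le2 : Trm → Trm → QF
  | not : QF → QF
  | and : QF → QF → QF
  | or  : QF → QF → QF

def QF.eval (r1 r2 : Ordinal → Ordinal → Prop) (v w : ℕ → Ordinal) : QF → Prop
  | .le s t  => s.val v w ≤ t.val v w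
  | .le1 s t => r1 (s.val v w) (t.val v w)
  | .le2 s t => r2 (s.val v w) (t.val v w)
  | .not φ   => ¬ φ.eval r1 r2 v w
  | .and φ ψ => φ.eval r1 r2 v w ∧ ψ.eval r1 r2 v w
  | .or φ ψ  => φ.eval r1 r2 v w ∨ ψ.eval r1 r2 v w

def Trm.NoAvar : Trm → Prop
  | .avar _ => False
  | _ => True

def QF.NoAvar : QF → Prop
  | .le s t  => s.NoAvar ∧ t.NoAvar
  | .le1 s t => s.NoAvar ∧ t.NoAvar
  | .le2 s t => s.NoAvar ∧ t.NoAvar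
  | .not φ   => φ.NoAvar
  | .and φ ψ => φ.NoAvar ∧ ψ.NoAvar
  | .or φ ψ  => φ.NoAvar ∧ ψ.NoAvar

def Trm.CstBelow (δ : Ordinal) : Trm → Prop
  | .cst c => c < δ
  | _ => True

def QF.CstBelow (δ : Ordinal) : QF → Prop
  | .le s t  => s.CstBelow δ ∧ t.CstBelow δ
  | .le1 s t => s.CstBelow δ ∧ t.CstBelow δ
  | .le2 s t => s.CstBelow δ ∧ t.CstBelow δ
  | .not φ   => φ.CstBelow δ
  | .and φ ψ => φ.CstBelow δ ∧ ψ.CstBelow δ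
  | .or φ ψ  => φ.CstBelow δ ∧ ψ.CstBelow δ

/-- Satisfaction of a Σ₁-formula (an existential block in front of a
quantifier-free formula without universal variables) in the segment of
ordinals `< δ`, with the indicated interpretations of `≤₁` and `≤₂`. -/
def Sat1 (r1 r2 : Ordinal → Ordinal → Prop) (δ : Ordinal) (φ : QF) : Prop :=
  ∃ v : ℕ → Ordinal, (∀ n, v n < δ) ∧ φ.eval r1 r2 v v

/-- Satisfaction of a Σ₂-formula (a block of existential quantifiers followed
by a block of universal quantifiers in front of a quantifier-free formula) in
the segment of ordinals `< δ`. -/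
def Sat2 (r1 r2 : Ordinal → Ordinal → Prop) (δ : Ordinal) (φ : QF) : Prop :=
  ∃ v : ℕ → Ordinal, (∀ n, v n < δ) ∧
    ∀ w : ℕ → Ordinal, (∀ n, w n < δ) → φ.eval r1 r2 v w

/-- `(α; ≤, ≤₁, ≤₂)` is a Σ₁-elementary substructure of `(β; ≤, ≤₁, ≤₂)`:
Σ₁-sentences with parameters `< α` hold in `α` iff they hold in `β`. -/
def Sig1Elem (r1 r2 : Ordinal → Ordinal → Prop) (α β : Ordinal) : Prop :=
  ∀ φ : QF, φ.NoAvar → φ.CstBelow α → (Sat1 r1 r2 α φ ↔ Sat1 r1 r2 β φ)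

/-- `(α; ≤, ≤₁, ≤₂)` is a Σ₂-elementary substructure of `(β; ≤, ≤₁, ≤₂)`. -/
def Sig2Elem (r1 r2 : Ordinal → Ordinal → Prop) (α β : Ordinal) : Prop :=
  ∀ φ : QF, φ.CstBelow α → (Sat2 r1 r2 α φ ↔ Sat2 r1 r2 β φ)

/-- The simultaneous recursive (in `β`) definition of `α ≤₁ β` (`i = false`)
and `α ≤₂ β` (`i = true`): `α ≤ᵢ β` iff `α ≤ β` and `(α; ≤, ≤₁, ≤₂)` is a
Σᵢ-elementary substructure of `(β; ≤, ≤₁, ≤₂)`, where the relations `≤₁, ≤₂`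
are the restrictions to the segment below `β`, already defined by recursion. -/
noncomputable def leAux : Ordinal → Bool → Ordinal → Prop :=
  WellFounded.fix Ordinal.lt_wf fun β IH i α =>
    α ≤ β ∧
      (match i with
        | false => Sig1Elem
        | true  => Sig2Elem)
        (fun x y => ∃ h : y < β, IH y h false x)
        (fun x y => ∃ h : y < β, IH y h true x) α β

/-- `α ≤₁ β` in the structure `R₂`. -/
def le1 (α β : Ordinal) : Prop := leAux β false α

/-- `α ≤₂ β` in the structure `R₂`. -/
def le2 (α β : Ordinal) : Prop := leAux β true α

def lt1 (α β : Ordinal) : Prop := le1 α β ∧ α < β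

def lt2 (α β : Ordinal) : Prop := le2 α β ∧ α < β

/-- `h` is an isomorphism (w.r.t. `≤, ≤₁, ≤₂`) on the set `A`. -/
def IsoOn (h : Ordinal → Ordinal) (A : Set Ordinal) : Prop :=
  ∀ x ∈ A, ∀ y ∈ A,
    (x ≤ y ↔ h x ≤ h y) ∧ (le1 x y ↔ le1 (h x) (h y)) ∧ (le2 x y ↔ le2 (h x) (h y))

def QF.trms : QF → List Trm
  | .le s t  => [s, t]
  | .le1 s t => [s, t]
  | .le2 s t => [s, t]
  | .not φ   => φ.trms
  | .and φ ψ => φ.trms ++ ψ.trms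
  | .or φ ψ  => φ.trms ++ ψ.trms

theorem QF.CstBelow.of_mem_trms {δ : Ordinal} {φ : QF} (hφ : φ.CstBelow δ) :
    ∀ t ∈ φ.trms, t.CstBelow δ := by
  induction φ <;> simp_all [QF.trms, QF.CstBelow, or_imp]

theorem Trm.val_comp {g : Ordinal → Ordinal} {v w : ℕ → Ordinal} :
    ∀ {t : Trm}, (∀ c, t = .cst c → g c = c) → t.val (g ∘ v) (g ∘ w) = g (t.val v w)
  | .evar _, _ => rfl
  | .avar _, _ => rfl
  | .cst c, hc => (hc c rfl).symm

theorem QF.eval_comp_iff {r1 r2 r1' r2' : Ordinal → Ordinal → Prop} {g : Ordinal → Ordinal}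
    {v w : ℕ → Ordinal} {T : Set Ordinal}
    (hpres : ∀ x ∈ T, ∀ y ∈ T,
      (x ≤ y ↔ g x ≤ g y) ∧ (r1 x y ↔ r1' (g x) (g y)) ∧ (r2 x y ↔ r2' (g x) (g y))) :
    ∀ {φ : QF}, (∀ t ∈ φ.trms, t.val v w ∈ T ∧ ∀ c, t = .cst c → g c = c) →
      (φ.eval r1' r2' (g ∘ v) (g ∘ w) ↔ φ.eval r1 r2 v w)
  | .le s t, h | .le1 s t, h | .le2 s t, h => by
    obtain ⟨⟨hsT, hs⟩, htT, ht⟩ := And.intro (h s (by simp [QF.trms])) (h t (by simp [QF.trms]))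
    have := hpres _ hsT _ htT
    simp only [QF.eval, Trm.val_comp hs, Trm.val_comp ht]
    tauto
  | .not _, h => not_congr (QF.eval_comp_iff hpres h)
  | .and _ _, h =>
    and_congr (QF.eval_comp_iff hpres fun t ht => h t (List.mem_append_left _ ht))
      (QF.eval_comp_iff hpres fun t ht => h t (List.mem_append_right _ ht))
  | .or _ _, h =>
    or_congr (QF.eval_comp_iff hpres fun t ht => h t (List.mem_append_left _ ht))
      (QF.eval_comp_iff hpres fun t ht => h t (List.mem_append_right _ ht))

theorem Sat1.mono {r1 r2 : Ordinal → Ordinal → Prop} {δ δ' : Ordinal} {φ : QF} (hδ : δ ≤ δ')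
    (h : Sat1 r1 r2 δ φ) : Sat1 r1 r2 δ' φ :=
  let ⟨v, hv, hφ⟩ := h
  ⟨v, fun n => (hv n).trans_le hδ, hφ⟩

theorem le1_iff (α β : Ordinal) :
    le1 α β ↔ α ≤ β ∧
      Sig1Elem (fun x y => ∃ _ : y < β, le1 x y) (fun x y => ∃ _ : y < β, le2 x y) α β := by
  unfold le1 le2 leAux
  rw [WellFounded.fix_eq]

theorem IsoOn.congr {f g : Ordinal → Ordinal} {A : Set Ordinal} (hf : IsoOn f A)
    (hfg : Set.EqOn f g A) : IsoOn g A := by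
  intro x hx y hy
  rw [← hfg hx, ← hfg hy]
  exact hf x hx y hy

theorem IsoOn.invOn {f g : Ordinal → Ordinal} {A B : Set Ordinal} (hf : IsoOn f A)
    (hgf : Set.InvOn g f A B) (hg : Set.MapsTo g B A) : IsoOn g B := by
  intro x hx y hy
  have := hf _ (hg hx) _ (hg hy)
  rw [hgf.2 hx, hgf.2 hy] at this
  exact this.imp Iff.symm (And.imp Iff.symm Iff.symm)

def FiniteSetCriterion (α β : Ordinal) : Prop :=
  ∀ X Y : Finset Ordinal, (∀ x ∈ X, x < α) → (∀ y ∈ Y, α ≤ y ∧ y < β) →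
    ∃ Ytil : Finset Ordinal, (∀ y ∈ Ytil, y < α) ∧ (∀ x ∈ X, ∀ y ∈ Ytil, x < y) ∧
      ∃ h : Ordinal → Ordinal,
        Set.BijOn h ↑(X ∪ Ytil) ↑(X ∪ Y) ∧ (∀ x ∈ X, h x = x) ∧
        h '' ↑Ytil = ↑Y ∧ IsoOn h ↑(X ∪ Ytil)

namespace FiniteSetCriterion

variable {α β : Ordinal}

theorem pos (H : FiniteSetCriterion α β) (hαβ : α < β) : 0 < α := by
  obtain ⟨Ytil, hYtil, -, h, -, -, himage, -⟩ := H ∅ {α} (by simp) (by simp [hαβ])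
  obtain ⟨x, hx, -⟩ : α ∈ h '' Ytil := by simp [himage]
  exact (hYtil x hx).pos

theorem exists_isoOn (H : FiniteSetCriterion α β) (hαβ : α < β) (T : Finset Ordinal)
    (hT : ∀ y ∈ T, y < β) :
    ∃ g : Ordinal → Ordinal, (∀ y ∈ T, y < α → g y = y) ∧ (∀ y, g y < α) ∧ IsoOn g T := by
  set X := T.filter (· < α)
  obtain ⟨Ytil, hYtil, -, h, hbij, hfix, -, hiso⟩ :=
    H X (T.filter (¬ · < α)) (fun x hx => (Finset.mem_filter.1 hx).2)
      fun y hy => ⟨not_lt.1 (Finset.mem_filter.1 hy).2, hT y (Finset.mem_filter.1 hy).1⟩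
  rw [Finset.filter_union_filter_not_eq] at hbij
  have hinv := hbij.invOn_invFunOn
  have hmaps := hbij.surjOn.mapsTo_invFunOn
  have hlt : ∀ x ∈ (↑(X ∪ Ytil) : Set Ordinal), x < α := by
    simp only [Finset.coe_union, Set.mem_union, Finset.mem_coe]
    rintro x (hx | hx)
    exacts [(Finset.mem_filter.1 hx).2, hYtil x hx]
  refine ⟨fun y => if y ∈ T then Function.invFunOn h ↑(X ∪ Ytil) y else 0, ?_, ?_, ?_⟩
  · intro y hy hyα
    have hyX : y ∈ X := Finset.mem_filter.2 ⟨hy, hyα⟩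
    simp only [if_pos hy]
    conv_lhs => rw [← hfix y hyX]
    exact hinv.1 (Finset.mem_union_left _ hyX)
  · intro y
    dsimp only
    split_ifs with hy
    exacts [hlt _ (hmaps hy), H.pos hαβ]
  · exact (hiso.invOn hinv hmaps).congr fun y hy => (if_pos hy).symm

end FiniteSetCriterion

end R2

/-- Finite-set criterion for `<₁` in `R₂`. -/
theorem lt1_of_finite_set_criterion (α β : Ordinal) (hαβ : α < β)
    (H : ∀ X Y : Finset Ordinal, (∀ x ∈ X, x < α) → (∀ y ∈ Y, α ≤ y ∧ y < β) →
      ∃ Ytil : Finset Ordinal, (∀ y ∈ Ytil, y < α) ∧ (∀ x ∈ X, ∀ y ∈ Ytil, x < y) ∧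
        ∃ h : Ordinal → Ordinal,
          Set.BijOn h ↑(X ∪ Ytil) ↑(X ∪ Y) ∧ (∀ x ∈ X, h x = x) ∧
          h '' ↑Ytil = ↑Y ∧ R2.IsoOn h ↑(X ∪ Ytil)) :
    R2.lt1 α β := by
  refine ⟨(R2.le1_iff α β).2 ⟨hαβ.le, fun φ _ hcb => ⟨R2.Sat1.mono hαβ.le, ?_⟩⟩, hαβ⟩
  rintro ⟨v, hv, hφ⟩
  let T := (φ.trms.map (R2.Trm.val v v)).toFinset
  have hTβ : ∀ y ∈ T, y < β := by
    simp only [T, List.mem_toFinset, List.mem_map, forall_exists_index, and_imp]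
    rintro _ (_ | _ | c) ht rfl
    exacts [hv _, hv _, (hcb.of_mem_trms _ ht).trans hαβ]
  obtain ⟨g, hfix, hgα, hiso⟩ := R2.FiniteSetCriterion.exists_isoOn H hαβ T hTβ
  refine ⟨g ∘ v, fun n => hgα _, (R2.QF.eval_comp_iff (T := ↑T) ?_ ?_).2 hφ⟩
  · intro x hx y hy
    simpa only [exists_prop, hTβ y hy, (hgα y).trans hαβ, true_and] using hiso x hx y hy
  · intro t ht
    have htT : t.val v v ∈ T := List.mem_toFinset.2 (List.mem_map_of_mem ht)
    refine ⟨htT, ?_⟩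
    rintro c rfl
    exact hfix c htT (hcb.of_mem_trms _ ht)

end
end

section
/- Suppose α <₂ β in R₂, X ⊆ α is finite, and Y is a nonempty finite subset of [α, β). Then there exist cofinally many copies of Y below β: for every η < β there exists a finite set Ỹ ⊆ β with η < min Ỹ and X < Ỹ together with an isomorphism X ∪ Ỹ ≅ X ∪ Y (as substructures of R₂) fixing X pointwise and mapping Ỹ onto Y. -/
open Ordinal

noncomputable section

namespace R2

def Rel1 (β : Ordinal) : Ordinal → Ordinal → Prop := fun x y => ∃ _ : y < β, le1 x y
def Rel2 (β : Ordinal) : Ordinal → Ordinal → Prop := fun x y => ∃ _ : y < β, le2 x y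

lemma le2_iff (α β : Ordinal) :
    le2 α β ↔ α ≤ β ∧ Sig2Elem (Rel1 β) (Rel2 β) α β := by
  show leAux β true α ↔ _
  rw [leAux, WellFounded.fix_eq]
  exact Iff.rfl

lemma Rel1_iff {β x y : Ordinal} (h : y < β) : Rel1 β x y ↔ le1 x y :=
  ⟨fun ⟨_, h⟩ => h, fun hh => ⟨h, hh⟩⟩

lemma Rel2_iff {β x y : Ordinal} (h : y < β) : Rel2 β x y ↔ le2 x y :=
  ⟨fun ⟨_, h⟩ => h, fun hh => ⟨h, hh⟩⟩

/-- conjunction of a list of formulas -/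
def conjQF : List QF → QF
  | [] => .le (.evar 0) (.evar 0)
  | φ :: l => .and φ (conjQF l)

lemma eval_conjQF (r1 r2 : Ordinal → Ordinal → Prop) (v w : ℕ → Ordinal) :
    ∀ l : List QF, ((conjQF l).eval r1 r2 v w ↔ ∀ φ ∈ l, φ.eval r1 r2 v w)
  | [] => by simp [conjQF, QF.eval, Trm.val]
  | φ :: l => by
      simp only [conjQF, QF.eval, eval_conjQF r1 r2 v w l, List.forall_mem_cons]

lemma noAvar_conjQF : ∀ l : List QF, (∀ φ ∈ l, φ.NoAvar) → (conjQF l).NoAvar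
  | [], _ => ⟨trivial, trivial⟩
  | φ :: l, h => ⟨h φ (by simp), noAvar_conjQF l fun ψ hψ => h ψ (by simp [hψ])⟩

lemma cstBelow_conjQF (δ : Ordinal) :
    ∀ l : List QF, (∀ φ ∈ l, φ.CstBelow δ) → (conjQF l).CstBelow δ
  | [], _ => ⟨trivial, trivial⟩
  | φ :: l, h => ⟨h φ (by simp), cstBelow_conjQF δ l fun ψ hψ => h ψ (by simp [hψ])⟩

/-- a literal: `φ` if `p` holds, otherwise `¬φ` -/
noncomputable def lit (p : Prop) (φ : QF) : QF :=
  @ite _ p (Classical.propDecidable p) φ (.not φ)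

lemma eval_lit (p : Prop) (φ : QF) (r1 r2 : Ordinal → Ordinal → Prop) (v w : ℕ → Ordinal) :
    (lit p φ).eval r1 r2 v w ↔ (φ.eval r1 r2 v w ↔ p) := by
  unfold lit
  split_ifs with h
  · exact ⟨fun he => iff_of_true he h, fun hi => hi.mpr h⟩
  · exact ⟨fun hne => iff_of_false hne h, fun hi hφ => h (hi.mp hφ)⟩

lemma noAvar_lit (p : Prop) (φ : QF) (h : φ.NoAvar) : (lit p φ).NoAvar := by
  unfold lit; split_ifs <;> exact h

lemma cstBelow_lit (δ : Ordinal) (p : Prop) (φ : QF) (h : φ.CstBelow δ) :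
    (lit p φ).CstBelow δ := by
  unfold lit; split_ifs <;> exact h

/-- formula asserting that the pair `(s,t)` realizes the same atomic relations
as the pair of ordinals `(a,b)` -/
noncomputable def pairForm (s t : Trm) (a b : Ordinal) : QF :=
  .and (lit (a ≤ b) (.le s t)) (.and (lit (le1 a b) (.le1 s t)) (lit (le2 a b) (.le2 s t)))

lemma eval_pairForm {β : Ordinal} (s t : Trm) (a b : Ordinal) (v w : ℕ → Ordinal)
    (hb : t.val v w < β) :
    (pairForm s t a b).eval (Rel1 β) (Rel2 β) v w ↔
      ((s.val v w ≤ t.val v w ↔ a ≤ b) ∧ (le1 (s.val v w) (t.val v w) ↔ le1 a b) ∧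
        (le2 (s.val v w) (t.val v w) ↔ le2 a b)) := by
  simp only [pairForm, QF.eval, eval_lit, Rel1_iff hb, Rel2_iff hb]

lemma noAvar_pairForm {s t : Trm} (hs : s.NoAvar) (ht : t.NoAvar) (a b : Ordinal) :
    (pairForm s t a b).NoAvar :=
  ⟨noAvar_lit _ _ ⟨hs, ht⟩, noAvar_lit _ _ ⟨hs, ht⟩, noAvar_lit _ _ ⟨hs, ht⟩⟩

lemma cstBelow_pairForm {δ : Ordinal} {s t : Trm} (hs : s.CstBelow δ) (ht : t.CstBelow δ)
    (a b : Ordinal) : (pairForm s t a b).CstBelow δ :=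
  ⟨cstBelow_lit _ _ _ ⟨hs, ht⟩, cstBelow_lit _ _ _ ⟨hs, ht⟩, cstBelow_lit _ _ _ ⟨hs, ht⟩⟩


variable {n : ℕ}

/-- `z` realizes the same atomic diagram over `X` as `ys`. -/
def CopyP (ys : Fin n → Ordinal) (X : Finset Ordinal) (z : Fin n → Ordinal) : Prop :=
  (∀ i j : Fin n, (z i ≤ z j ↔ ys i ≤ ys j) ∧ (le1 (z i) (z j) ↔ le1 (ys i) (ys j)) ∧
      (le2 (z i) (z j) ↔ le2 (ys i) (ys j))) ∧
  (∀ x ∈ X, ∀ i : Fin n,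
    ((x ≤ z i ↔ x ≤ ys i) ∧ (le1 x (z i) ↔ le1 x (ys i)) ∧ (le2 x (z i) ↔ le2 x (ys i))) ∧
    ((z i ≤ x ↔ ys i ≤ x) ∧ (le1 (z i) x ↔ le1 (ys i) x) ∧ (le2 (z i) x ↔ le2 (ys i) x)))

/-- the diagram formula -/
noncomputable def Phi (ys : Fin n → Ordinal) (X : Finset Ordinal) (t : Fin n → Trm) : QF :=
  conjQF (
    ((List.finRange n).flatMap fun i =>
      (List.finRange n).map fun j => pairForm (t i) (t j) (ys i) (ys j))
    ++ (X.toList.flatMap fun x => (List.finRange n).flatMap fun i =>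
        [pairForm (.cst x) (t i) x (ys i), pairForm (t i) (.cst x) (ys i) x]))

lemma eval_Phi {β : Ordinal} (ys : Fin n → Ordinal) (X : Finset Ordinal)
    (t : Fin n → Trm) (v w : ℕ → Ordinal)
    (ht : ∀ i, (t i).val v w < β) (hXβ : ∀ x ∈ X, x < β) :
    (Phi ys X t).eval (Rel1 β) (Rel2 β) v w ↔ CopyP ys X (fun i => (t i).val v w) := by
  rw [Phi, eval_conjQF]
  simp only [List.mem_append, List.mem_flatMap, List.mem_map, List.mem_finRange,
    Finset.mem_toList, List.mem_cons, List.mem_singleton, List.not_mem_nil, or_false, true_and]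
  constructor
  · intro H
    constructor
    · intro i j
      have := H _ (Or.inl ⟨i, j, rfl⟩)
      rwa [eval_pairForm _ _ _ _ _ _ (ht j)] at this
    · intro x hx i
      have h1 := H _ (Or.inr ⟨x, hx, i, Or.inl rfl⟩)
      have h2 := H _ (Or.inr ⟨x, hx, i, Or.inr rfl⟩)
      rw [eval_pairForm _ _ _ _ _ _ (ht i)] at h1
      rw [eval_pairForm _ _ _ _ _ _ (hXβ x hx)] at h2
      exact ⟨h1, h2⟩
  · rintro ⟨H1, H2⟩ φ (⟨i, j, rfl⟩ | ⟨x, hx, i, (rfl | rfl)⟩)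
    · rw [eval_pairForm _ _ _ _ _ _ (ht j)]; exact H1 i j
    · rw [eval_pairForm _ _ _ _ _ _ (ht i)]; exact (H2 x hx i).1
    · rw [eval_pairForm _ _ _ _ _ _ (hXβ x hx)]; exact (H2 x hx i).2

lemma noAvar_Phi (ys : Fin n → Ordinal) (X : Finset Ordinal) (t : Fin n → Trm)
    (ht : ∀ i, (t i).NoAvar) : (Phi ys X t).NoAvar := by
  apply noAvar_conjQF
  intro φ hφ
  simp only [List.mem_append, List.mem_flatMap, List.mem_map, List.mem_finRange,
    Finset.mem_toList, List.mem_cons, List.mem_singleton, List.not_mem_nil, or_false, true_and] at hφ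
  rcases hφ with ⟨i, j, rfl⟩ | ⟨x, hx, i, (rfl | rfl)⟩
  · exact noAvar_pairForm (ht i) (ht j) _ _
  · exact noAvar_pairForm (show (Trm.cst x).NoAvar from trivial) (ht i) _ _
  · exact noAvar_pairForm (ht i) (show (Trm.cst x).NoAvar from trivial) _ _

lemma cstBelow_Phi {δ : Ordinal} (ys : Fin n → Ordinal) (X : Finset Ordinal) (t : Fin n → Trm)
    (ht : ∀ i, (t i).CstBelow δ) (hXδ : ∀ x ∈ X, x < δ) : (Phi ys X t).CstBelow δ := by
  apply cstBelow_conjQF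
  intro φ hφ
  simp only [List.mem_append, List.mem_flatMap, List.mem_map, List.mem_finRange,
    Finset.mem_toList, List.mem_cons, List.mem_singleton, List.not_mem_nil, or_false, true_and] at hφ
  rcases hφ with ⟨i, j, rfl⟩ | ⟨x, hx, i, (rfl | rfl)⟩
  · exact cstBelow_pairForm (ht i) (ht j) _ _
  · exact cstBelow_pairForm (show Trm.CstBelow δ (.cst x) from hXδ x hx) (ht i) _ _
  · exact cstBelow_pairForm (ht i) (show Trm.CstBelow δ (.cst x) from hXδ x hx) _ _

lemma eval_congr_noAvar (r1 r2 : Ordinal → Ordinal → Prop) (v w w' : ℕ → Ordinal) :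
    ∀ φ : QF, φ.NoAvar → (φ.eval r1 r2 v w ↔ φ.eval r1 r2 v w')
  | .le s t, ⟨hs, ht⟩ => by
      cases s <;> cases t <;> simp_all [QF.eval, Trm.val, Trm.NoAvar]
  | .le1 s t, ⟨hs, ht⟩ => by
      cases s <;> cases t <;> simp_all [QF.eval, Trm.val, Trm.NoAvar]
  | .le2 s t, ⟨hs, ht⟩ => by
      cases s <;> cases t <;> simp_all [QF.eval, Trm.val, Trm.NoAvar]
  | .not φ, h => by
      simp only [QF.eval, eval_congr_noAvar r1 r2 v w w' φ h]
  | .and φ ψ, ⟨h1, h2⟩ => by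
      simp only [QF.eval, eval_congr_noAvar r1 r2 v w w' φ h1,
        eval_congr_noAvar r1 r2 v w w' ψ h2]
  | .or φ ψ, ⟨h1, h2⟩ => by
      simp only [QF.eval, eval_congr_noAvar r1 r2 v w w' φ h1,
        eval_congr_noAvar r1 r2 v w w' ψ h2]

lemma sat1_iff_sat2 (r1 r2 : Ordinal → Ordinal → Prop) (δ : Ordinal) (φ : QF)
    (h : φ.NoAvar) : Sat1 r1 r2 δ φ ↔ Sat2 r1 r2 δ φ := by
  constructor
  · rintro ⟨v, hv, he⟩
    exact ⟨v, hv, fun w hw => (eval_congr_noAvar r1 r2 v v w φ h).mp he⟩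
  · rintro ⟨v, hv, he⟩
    exact ⟨v, hv, he v hv⟩

lemma sig1_of_sig2 {r1 r2 : Ordinal → Ordinal → Prop} {α β : Ordinal}
    (h : Sig2Elem r1 r2 α β) : Sig1Elem r1 r2 α β := fun φ hna hcb => by
  rw [sat1_iff_sat2 r1 r2 α φ hna, sat1_iff_sat2 r1 r2 β φ hna]
  exact h φ hcb

end R2
/-- If `α <₂ β` in `R₂`, then any finite configuration `X ⊆ α`, `Y ⊆ [α, β)`
has copies of `Y` cofinally below `β`. -/
theorem cofinal_copies_below_beta (α β : Ordinal) (h2 : R2.lt2 α β)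
    (X Y : Finset Ordinal) (hX : ∀ x ∈ X, x < α) (hY : ∀ y ∈ Y, α ≤ y ∧ y < β)
    (hYne : Y.Nonempty) :
    ∀ η < β, ∃ Ytil : Finset Ordinal,
      (∀ y ∈ Ytil, y < β) ∧ (∀ y ∈ Ytil, η < y) ∧ (∀ x ∈ X, ∀ y ∈ Ytil, x < y) ∧
      ∃ h : Ordinal → Ordinal,
        Set.BijOn h ↑(X ∪ Ytil) ↑(X ∪ Y) ∧ (∀ x ∈ X, h x = x) ∧
        h '' ↑Ytil = ↑Y ∧ R2.IsoOn h ↑(X ∪ Ytil) := by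
  classical
  intro η hη
  obtain ⟨hle2, hlt⟩ := h2
  obtain ⟨-, S2⟩ := (R2.le2_iff α β).mp hle2
  have S1 := R2.sig1_of_sig2 S2
  set n := Y.card with hn
  have npos : 0 < n := Finset.card_pos.mpr hYne
  set e := Y.orderIsoOfFin hn.symm with he
  set ys : Fin n → Ordinal := fun i => (e i : Ordinal) with hysdef
  have hys_mem : ∀ i, ys i ∈ Y := fun i => (e i).2
  have hys_mono : StrictMono ys := fun i j hij => e.strictMono hij
  have hys_surj : ∀ y ∈ Y, ∃ i, ys i = y := fun y hy =>
    ⟨e.symm ⟨y, hy⟩, congrArg Subtype.val (e.apply_symm_apply ⟨y, hy⟩)⟩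
  have hyα : ∀ i, α ≤ ys i := fun i => (hY _ (hys_mem i)).1
  have hyβ : ∀ i, ys i < β := fun i => (hY _ (hys_mem i)).2
  have hXβ : ∀ x ∈ X, x < β := fun x hx => (hX x hx).trans hlt
  -- Key existence claim
  have key : ∃ z : Fin n → Ordinal, (∀ i, z i < β) ∧ (∀ i, η < z i) ∧ R2.CopyP ys X z := by
    by_contra hno
    push_neg at hno
    set φ : R2.QF :=
      .not (.and (.not (.le (.avar 0) (.evar 0))) (R2.Phi ys X fun i => .avar i)) with hφ
    have hφcb : φ.CstBelow α :=
      ⟨⟨trivial, trivial⟩,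
        R2.cstBelow_Phi ys X _ (fun i => (trivial : R2.Trm.CstBelow α (.avar i))) hX⟩
    have hSat2β : R2.Sat2 (R2.Rel1 β) (R2.Rel2 β) β φ := by
      refine ⟨fun _ => η, fun _ => hη, ?_⟩
      intro w hw
      rw [hφ]
      simp only [R2.QF.eval, R2.Trm.val, not_and, not_not]
      intro h1
      rw [R2.eval_Phi ys X _ _ _ (fun i => hw i) hXβ]
      intro hPhi
      refine hno (fun i => w i) (fun i => hw i) ?_ hPhi
      intro i
      have h0 : η < w 0 := not_le.mp h1
      have hle0 : w (0 : ℕ) ≤ w (i : ℕ) := by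
        have := (hPhi.1 ⟨0, npos⟩ i).1
        exact this.mpr (hys_mono.monotone (Fin.le_def.mpr (Nat.zero_le _)))
      exact lt_of_lt_of_le h0 hle0
    obtain ⟨v0, hv0, hall⟩ := (S2 φ hφcb).mpr hSat2β
    set u0 := v0 0 with hu0
    set ψ : R2.QF :=
      .and (.not (.le (.evar 0) (.cst u0))) (R2.Phi ys X fun i => .evar i) with hψ
    have hψna : ψ.NoAvar :=
      ⟨⟨trivial, trivial⟩,
        R2.noAvar_Phi ys X _ (fun i => (trivial : R2.Trm.NoAvar (.evar i)))⟩
    have hψcb : ψ.CstBelow α :=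
      ⟨⟨trivial, hv0 0⟩,
        R2.cstBelow_Phi ys X _ (fun i => (trivial : R2.Trm.CstBelow α (.evar i))) hX⟩
    have hSat1β : R2.Sat1 (R2.Rel1 β) (R2.Rel2 β) β ψ := by
      refine ⟨fun k => if hk : k < n then ys ⟨k, hk⟩ else α, ?_, ?_⟩
      · intro k
        show (if hk : k < n then ys ⟨k, hk⟩ else α) < β
        by_cases hk : k < n
        · rw [dif_pos hk]; exact hyβ _
        · rw [dif_neg hk]; exact hlt
      · rw [hψ]
        simp only [R2.QF.eval, R2.Trm.val]
        constructor
        · rw [dif_pos npos]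
          exact not_le.mpr (lt_of_lt_of_le (hv0 0) (hyα ⟨0, npos⟩))
        · rw [R2.eval_Phi ys X _ _ _
            (fun i => by simp only [R2.Trm.val, dif_pos i.isLt]; exact hyβ _) hXβ]
          have hfun : (fun i : Fin n =>
              R2.Trm.val (fun k => if hk : k < n then ys ⟨k, hk⟩ else α)
                (fun k => if hk : k < n then ys ⟨k, hk⟩ else α) (.evar i)) = ys := by
            funext i
            simp only [R2.Trm.val, dif_pos i.isLt]
          rw [hfun]
          exact ⟨fun i j => ⟨Iff.rfl, Iff.rfl, Iff.rfl⟩,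
            fun x hx i => ⟨⟨Iff.rfl, Iff.rfl, Iff.rfl⟩, ⟨Iff.rfl, Iff.rfl, Iff.rfl⟩⟩⟩
    obtain ⟨v1, hv1, hev⟩ := (S1 ψ hψna hψcb).mpr hSat1β
    rw [hψ] at hev
    simp only [R2.QF.eval, R2.Trm.val] at hev
    obtain ⟨h1, hPhi⟩ := hev
    rw [R2.eval_Phi ys X _ _ _ (fun i => (hv1 i).trans hlt) hXβ] at hPhi
    have hcon := hall v1 hv1
    rw [hφ] at hcon
    simp only [R2.QF.eval, R2.Trm.val, not_and, not_not] at hcon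
    have hcon2 := hcon h1
    rw [R2.eval_Phi ys X _ _ _ (fun i => (hv1 i).trans hlt) hXβ] at hcon2
    exact hcon2 hPhi
  obtain ⟨z, hzβ, hzη, hcopy⟩ := key
  have hzmono : StrictMono z := by
    intro i j hij
    have h1 := (hcopy.1 i j).1
    have h2 := (hcopy.1 j i).1
    have hy := hys_mono hij
    rw [lt_iff_le_not_ge] at hy ⊢
    exact ⟨h1.mpr hy.1, fun hc => hy.2 (h2.mp hc)⟩
  have hXz : ∀ x ∈ X, ∀ i, x < z i := by
    intro x hx i
    have hiff := ((hcopy.2 x hx i).2).1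
    have hns : ¬ ys i ≤ x := not_le.mpr (lt_of_lt_of_le (hX x hx) (hyα i))
    exact lt_of_not_ge fun hc => hns (hiff.mp hc)
  set Ytil := Finset.image z Finset.univ with hYtil
  have hmemYtil : ∀ o, o ∈ Ytil ↔ ∃ i, z i = o := by intro o; simp [hYtil]
  set hfun : Ordinal → Ordinal :=
    fun o => if hh : ∃ i, z i = o then ys hh.choose else o with hfdef
  have hz_val : ∀ i, hfun (z i) = ys i := by
    intro i
    have hex : ∃ j, z j = z i := ⟨i, rfl⟩
    simp only [hfdef]
    rw [dif_pos hex]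
    exact congrArg ys (hzmono.injective hex.choose_spec)
  have hfix : ∀ x ∈ X, hfun x = x := by
    intro x hx
    simp only [hfdef]
    rw [dif_neg]
    rintro ⟨i, hi⟩
    exact absurd hi (ne_of_gt (hXz x hx i))
  have hmemU : ∀ o, o ∈ (↑(X ∪ Ytil) : Set Ordinal) ↔ o ∈ X ∨ ∃ i, z i = o := by
    intro o
    simp [hYtil, Finset.mem_union]
  have hmemV : ∀ o, o ∈ (↑(X ∪ Y) : Set Ordinal) ↔ o ∈ X ∨ o ∈ Y := by
    intro o; simp [Finset.mem_union]
  refine ⟨Ytil, ?_, ?_, ?_, hfun, ⟨?_, ?_, ?_⟩, hfix, ?_, ?_⟩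
  · intro y hy; obtain ⟨i, rfl⟩ := (hmemYtil y).mp hy; exact hzβ i
  · intro y hy; obtain ⟨i, rfl⟩ := (hmemYtil y).mp hy; exact hzη i
  · intro x hx y hy; obtain ⟨i, rfl⟩ := (hmemYtil y).mp hy; exact hXz x hx i
  · -- MapsTo
    intro o ho
    rcases (hmemU o).mp ho with hoX | ⟨i, rfl⟩
    · rw [hfix o hoX]; exact (hmemV o).mpr (Or.inl hoX)
    · rw [hz_val i]; exact (hmemV _).mpr (Or.inr (hys_mem i))
  · -- InjOn
    intro a ha b hb hab
    rcases (hmemU a).mp ha with haX | ⟨i, rfl⟩ <;> rcases (hmemU b).mp hb with hbX | ⟨j, rfl⟩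
    · rwa [hfix a haX, hfix b hbX] at hab
    · rw [hfix a haX, hz_val j] at hab
      exact absurd hab (ne_of_lt (lt_of_lt_of_le (hX a haX) (hyα j)))
    · rw [hz_val i, hfix b hbX] at hab
      exact absurd hab.symm (ne_of_lt (lt_of_lt_of_le (hX b hbX) (hyα i)))
    · rw [hz_val i, hz_val j] at hab
      exact congrArg z (hys_mono.injective hab)
  · -- SurjOn
    intro o ho
    rcases (hmemV o).mp ho with hoX | hoY
    · exact ⟨o, (hmemU o).mpr (Or.inl hoX), hfix o hoX⟩
    · obtain ⟨i, rfl⟩ := hys_surj o hoY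
      exact ⟨z i, (hmemU _).mpr (Or.inr ⟨i, rfl⟩), hz_val i⟩
  · -- image
    apply Set.ext
    intro o
    constructor
    · rintro ⟨a, ha, rfl⟩
      obtain ⟨i, rfl⟩ := (hmemYtil a).mp (Finset.mem_coe.mp ha)
      rw [hz_val i]
      exact Finset.mem_coe.mpr (hys_mem i)
    · intro hoY
      obtain ⟨i, rfl⟩ := hys_surj o (Finset.mem_coe.mp hoY)
      exact ⟨z i, Finset.mem_coe.mpr ((hmemYtil _).mpr ⟨i, rfl⟩), hz_val i⟩
  · -- IsoOn
    intro a ha b hb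
    rcases (hmemU a).mp ha with haX | ⟨i, rfl⟩ <;> rcases (hmemU b).mp hb with hbX | ⟨j, rfl⟩
    · rw [hfix a haX, hfix b hbX]
      exact ⟨Iff.rfl, Iff.rfl, Iff.rfl⟩
    · rw [hfix a haX, hz_val j]
      exact (hcopy.2 a haX j).1
    · rw [hz_val i, hfix b hbX]
      exact (hcopy.2 b hbX i).2
    · rw [hz_val i, hz_val j]
      exact hcopy.1 i j

end
end

section
/- In the structure R₁, for every ordinal α the class of all ordinals is isomorphic to the final segment [α+1, ∞) via translation: for all ordinals ξ, η, ξ ≤₁ η holds if and only if α+1+ξ ≤₁ α+1+η holds. -/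
/-!
Induction on `η`, both directions at once.

Backward: a Σ₁-formula over `η` with parameters below `ξ` is shifted by `α + 1` and
conjoined with "all its variables exceed `α`" — expressible with the parameter `α` because
`α + 1` is a successor. A witness below `α + 1 + ξ` of the shifted formula then shifts back to a
witness below `ξ`, the induction hypothesis translating the `≤₁`-atoms.

Forward: `ξ <₁ η` forces `ξ` to be a limit. A witness below `α + 1 + η` splits into values
`≤ α`, which are frozen, and values `α + 1 + z` with `z < η`; this turns the formula into one about
`z` with parameters below `ξ`, which reflects from `η` to `ξ`. The only atoms not handled by the
induction hypothesis are `x ≤₁ α + 1 + z` with `x ≤ α`. The `z` satisfying this form an initial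
segment, which is either bounded by a parameter below `ξ` or, by continuity of `≤₁` at the limit
`α + 1 + ξ` and `α + 1 + ξ ≤₁ α + 1 + z`, contains all of `η`.
-/

open Ordinal

noncomputable section

namespace R1

/-- Terms of the language `{≤, ≤₁}`: variables and parameters. -/
inductive Trm : Type 1 where
  | evar : ℕ → Trm
  | cst  : Ordinal → Trm

def Trm.val (v : ℕ → Ordinal) : Trm → Ordinal
  | .evar n => v n
  | .cst c  => c

/-- Quantifier-free formulas in the language `{≤, ≤₁}`. -/
inductive QF : Type 1 where
  | le  : Trm → Trm → QF
  | le1 : Trm → Trm → QF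
  | not : QF → QF
  | and : QF → QF → QF
  | or  : QF → QF → QF

def QF.eval (r1 : Ordinal → Ordinal → Prop) (v : ℕ → Ordinal) : QF → Prop
  | .le s t  => s.val v ≤ t.val v
  | .le1 s t => r1 (s.val v) (t.val v)
  | .not φ   => ¬ φ.eval r1 v
  | .and φ ψ => φ.eval r1 v ∧ ψ.eval r1 v
  | .or φ ψ  => φ.eval r1 v ∨ ψ.eval r1 v

def Trm.CstBelow (δ : Ordinal) : Trm → Prop
  | .cst c  => c < δ
  | .evar _ => True

def QF.CstBelow (δ : Ordinal) : QF → Prop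
  | .le s t  => s.CstBelow δ ∧ t.CstBelow δ
  | .le1 s t => s.CstBelow δ ∧ t.CstBelow δ
  | .not φ   => φ.CstBelow δ
  | .and φ ψ => φ.CstBelow δ ∧ ψ.CstBelow δ
  | .or φ ψ  => φ.CstBelow δ ∧ ψ.CstBelow δ

/-- Satisfaction of a Σ₁-formula (existential block in front of a
quantifier-free formula) in the segment of ordinals `< δ`. -/
def Sat (r1 : Ordinal → Ordinal → Prop) (δ : Ordinal) (φ : QF) : Prop :=
  ∃ v : ℕ → Ordinal, (∀ n, v n < δ) ∧ φ.eval r1 v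

/-- `(α; ≤, ≤₁)` is a Σ₁-elementary substructure of `(β; ≤, ≤₁)`. -/
def Sig1Elem (r1 : Ordinal → Ordinal → Prop) (α β : Ordinal) : Prop :=
  ∀ φ : QF, φ.CstBelow α → (Sat r1 α φ ↔ Sat r1 β φ)

/-- The recursive (in `β`) definition of `α ≤₁ β` in `R₁`. -/
noncomputable def leAux : Ordinal → Ordinal → Prop :=
  WellFounded.fix Ordinal.lt_wf fun β IH α =>
    α ≤ β ∧ Sig1Elem (fun x y => ∃ h : y < β, IH y h x) α β

/-- `α ≤₁ β` in the structure `R₁`. -/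
def le1 (α β : Ordinal) : Prop := leAux β α

def lt1 (α β : Ordinal) : Prop := le1 α β ∧ α < β

end R1

namespace R1

theorem Trm.CstBelow.mono {γ δ : Ordinal} (h : γ ≤ δ) :
    ∀ {t : Trm}, t.CstBelow γ → t.CstBelow δ
  | .evar _, _ => trivial
  | .cst _, hc => hc.trans_le h

theorem QF.CstBelow.mono {γ δ : Ordinal} (h : γ ≤ δ) {φ : QF} (hφ : φ.CstBelow γ) :
    φ.CstBelow δ := by
  induction φ with
  | le s t | le1 s t => exact ⟨hφ.1.mono h, hφ.2.mono h⟩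
  | not φ ih => exact ih hφ
  | and φ ψ ih₁ ih₂ | or φ ψ ih₁ ih₂ => exact ⟨ih₁ hφ.1, ih₂ hφ.2⟩

theorem Trm.val_lt {δ : Ordinal} {v : ℕ → Ordinal} (hv : ∀ n, v n < δ) :
    ∀ {t : Trm}, t.CstBelow δ → t.val v < δ
  | .evar n, _ => hv n
  | .cst _, hc => hc

theorem QF.eval_congr_rel {r r' : Ordinal → Ordinal → Prop} {δ : Ordinal} {v : ℕ → Ordinal}
    (hv : ∀ n, v n < δ) (h : ∀ x < δ, ∀ y < δ, (r x y ↔ r' x y)) {φ : QF}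
    (hφ : φ.CstBelow δ) : φ.eval r v ↔ φ.eval r' v := by
  induction φ with
  | le s t => rfl
  | le1 s t => exact h _ (Trm.val_lt hv hφ.1) _ (Trm.val_lt hv hφ.2)
  | not φ ih => exact not_congr (ih hφ)
  | and φ ψ ih₁ ih₂ => exact and_congr (ih₁ hφ.1) (ih₂ hφ.2)
  | or φ ψ ih₁ ih₂ => exact or_congr (ih₁ hφ.1) (ih₂ hφ.2)

def Trm.maxVar : Trm → ℕ
  | .evar n => n
  | .cst _ => 0

def QF.maxVar : QF → ℕ
  | .le s t | .le1 s t => max s.maxVar t.maxVar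
  | .not φ => φ.maxVar
  | .and φ ψ | .or φ ψ => max φ.maxVar ψ.maxVar

theorem Trm.val_congr {v w : ℕ → Ordinal} :
    ∀ {t : Trm}, (∀ n ≤ t.maxVar, v n = w n) → t.val v = t.val w
  | .evar n, h => h n le_rfl
  | .cst _, _ => rfl

theorem QF.eval_congr_var {r : Ordinal → Ordinal → Prop} {v w : ℕ → Ordinal} {φ : QF}
    (h : ∀ n ≤ φ.maxVar, v n = w n) : φ.eval r v ↔ φ.eval r w := by
  induction φ with
  | le s t | le1 s t =>
    rw [QF.eval, QF.eval, Trm.val_congr (t := s) fun n hn => h n (hn.trans (le_max_left _ _)),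
      Trm.val_congr (t := t) fun n hn => h n (hn.trans (le_max_right _ _))]
  | not φ ih => exact not_congr (ih h)
  | and φ ψ ih₁ ih₂ =>
    exact and_congr (ih₁ fun n hn => h n (hn.trans (le_max_left _ _)))
      (ih₂ fun n hn => h n (hn.trans (le_max_right _ _)))
  | or φ ψ ih₁ ih₂ =>
    exact or_congr (ih₁ fun n hn => h n (hn.trans (le_max_left _ _)))
      (ih₂ fun n hn => h n (hn.trans (le_max_right _ _)))

def QF.mapAtoms (fle fle1 : Trm → Trm → QF) : QF → QF
  | .le s t => fle s t
  | .le1 s t => fle1 s t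
  | .not φ => .not (φ.mapAtoms fle fle1)
  | .and φ ψ => .and (φ.mapAtoms fle fle1) (ψ.mapAtoms fle fle1)
  | .or φ ψ => .or (φ.mapAtoms fle fle1) (ψ.mapAtoms fle fle1)

section mapAtoms

variable {fle fle1 : Trm → Trm → QF} {δ : Ordinal}

theorem QF.eval_mapAtoms {r r' : Ordinal → Ordinal → Prop} {v w : ℕ → Ordinal}
    (hle : ∀ s t, s.CstBelow δ → t.CstBelow δ →
      ((fle s t).eval r' w ↔ s.val v ≤ t.val v))
    (hle1 : ∀ s t, s.CstBelow δ → t.CstBelow δ →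
      ((fle1 s t).eval r' w ↔ r (s.val v) (t.val v)))
    {φ : QF} (hφ : φ.CstBelow δ) : (φ.mapAtoms fle fle1).eval r' w ↔ φ.eval r v := by
  induction φ with
  | le s t => exact hle s t hφ.1 hφ.2
  | le1 s t => exact hle1 s t hφ.1 hφ.2
  | not φ ih => exact not_congr (ih hφ)
  | and φ ψ ih₁ ih₂ => exact and_congr (ih₁ hφ.1) (ih₂ hφ.2)
  | or φ ψ ih₁ ih₂ => exact or_congr (ih₁ hφ.1) (ih₂ hφ.2)

theorem QF.CstBelow.mapAtoms {δ' : Ordinal}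
    (hle : ∀ s t, s.CstBelow δ → t.CstBelow δ → (fle s t).CstBelow δ')
    (hle1 : ∀ s t, s.CstBelow δ → t.CstBelow δ → (fle1 s t).CstBelow δ')
    {φ : QF} (hφ : φ.CstBelow δ) : (φ.mapAtoms fle fle1).CstBelow δ' := by
  induction φ with
  | le s t => exact hle s t hφ.1 hφ.2
  | le1 s t => exact hle1 s t hφ.1 hφ.2
  | not φ ih => exact ih hφ
  | and φ ψ ih₁ ih₂ | or φ ψ ih₁ ih₂ => exact ⟨ih₁ hφ.1, ih₂ hφ.2⟩

end mapAtoms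

def Trm.mapCst (f : Ordinal → Ordinal) : Trm → Trm
  | .evar n => .evar n
  | .cst c => .cst (f c)

theorem Trm.val_mapCst_comp (f : Ordinal → Ordinal) (v : ℕ → Ordinal) :
    ∀ t : Trm, (t.mapCst f).val (f ∘ v) = f (t.val v)
  | .evar _ | .cst _ => rfl

theorem Trm.CstBelow.mapCst {f : Ordinal → Ordinal} {δ δ' : Ordinal}
    (hf : ∀ c < δ, f c < δ') : ∀ {t : Trm}, t.CstBelow δ → (t.mapCst f).CstBelow δ'
  | .evar _, _ => trivial
  | .cst c, hc => hf c hc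

def QF.mapCst (f : Ordinal → Ordinal) (φ : QF) : QF :=
  φ.mapAtoms (fun s t => .le (s.mapCst f) (t.mapCst f)) (fun s t => .le1 (s.mapCst f) (t.mapCst f))

theorem QF.eval_mapCst {f : Ordinal → Ordinal} (hf : StrictMono f)
    {r r' : Ordinal → Ordinal → Prop} {δ : Ordinal}
    (hr : ∀ a < δ, ∀ b < δ, (r' (f a) (f b) ↔ r a b))
    {v : ℕ → Ordinal} (hv : ∀ n, v n < δ) {φ : QF} (hφ : φ.CstBelow δ) :
    (φ.mapCst f).eval r' (f ∘ v) ↔ φ.eval r v := by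
  refine QF.eval_mapAtoms (fun s t _ _ => ?_) (fun s t hs ht => ?_) hφ
  · change (s.mapCst f).val (f ∘ v) ≤ (t.mapCst f).val (f ∘ v) ↔ _
    rw [Trm.val_mapCst_comp, Trm.val_mapCst_comp, hf.le_iff_le]
  · change r' ((s.mapCst f).val (f ∘ v)) ((t.mapCst f).val (f ∘ v)) ↔ _
    rw [Trm.val_mapCst_comp, Trm.val_mapCst_comp]
    exact hr _ (Trm.val_lt hv hs) _ (Trm.val_lt hv ht)

theorem QF.CstBelow.mapCst {f : Ordinal → Ordinal} {δ δ' : Ordinal} (hf : ∀ c < δ, f c < δ')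
    {φ : QF} (hφ : φ.CstBelow δ) : (φ.mapCst f).CstBelow δ' := by
  refine hφ.mapAtoms (fun _ _ hs ht => ?_) (fun _ _ hs ht => ?_) <;>
    exact ⟨hs.mapCst hf, ht.mapCst hf⟩

open Classical in
def QF.ofProp (p : Prop) : QF :=
  if p then .le (.evar 0) (.evar 0) else .not (.le (.evar 0) (.evar 0))

theorem QF.eval_ofProp (p : Prop) (r : Ordinal → Ordinal → Prop) (v : ℕ → Ordinal) :
    (QF.ofProp p).eval r v ↔ p := by
  unfold QF.ofProp
  split_ifs with hp
  · exact iff_of_true (le_refl (v 0)) hp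
  · exact iff_of_false (not_not.2 (le_refl (v 0))) hp

theorem QF.cstBelow_ofProp (p : Prop) (δ : Ordinal) : (QF.ofProp p).CstBelow δ := by
  unfold QF.ofProp
  split_ifs <;> exact ⟨trivial, trivial⟩

theorem le1_iff_sig1Elem {γ δ : Ordinal} :
    le1 γ δ ↔ γ ≤ δ ∧ Sig1Elem (fun x y => ∃ _ : y < δ, le1 x y) γ δ := by
  unfold le1 leAux
  rw [WellFounded.fix_eq]

theorem Sat.mono {r : Ordinal → Ordinal → Prop} {γ δ : Ordinal} (h : γ ≤ δ) {φ : QF} :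
    Sat r γ φ → Sat r δ φ :=
  fun ⟨v, hv, hφ⟩ => ⟨v, fun n => (hv n).trans_le h, hφ⟩

theorem le1_iff_forall_sat {γ δ : Ordinal} :
    le1 γ δ ↔ γ ≤ δ ∧ ∀ φ : QF, φ.CstBelow γ → Sat le1 δ φ → Sat le1 γ φ := by
  have hsat : ∀ {δ'}, δ' ≤ δ → ∀ {φ : QF}, φ.CstBelow δ' →
      (Sat (fun x y => ∃ _ : y < δ, le1 x y) δ' φ ↔ Sat le1 δ' φ) := fun hδ' _ hφ =>
    exists_congr fun _ => and_congr_right fun hv =>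
      QF.eval_congr_rel hv (fun _ _ _ hy => exists_prop_of_true (hy.trans_le hδ')) hφ
  rw [le1_iff_sig1Elem]
  refine and_congr_right fun hγδ => forall₂_congr fun φ hφ => ?_
  rw [hsat hγδ hφ, hsat le_rfl (hφ.mono hγδ)]
  exact ⟨Iff.mpr, fun h => ⟨Sat.mono hγδ, h⟩⟩

theorem le1.le {a b : Ordinal} (h : le1 a b) : a ≤ b :=
  (le1_iff_forall_sat.1 h).1

theorem le1_refl (a : Ordinal) : le1 a a :=
  le1_iff_forall_sat.2 ⟨le_rfl, fun _ _ => id⟩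

theorem le1.trans {a b c : Ordinal} (hab : le1 a b) (hbc : le1 b c) : le1 a c := by
  rw [le1_iff_forall_sat] at *
  exact ⟨hab.1.trans hbc.1, fun φ hφ h => hab.2 φ hφ (hbc.2 φ (hφ.mono hab.1) h)⟩

theorem le1.of_le_of_le {a b c : Ordinal} (h : le1 a c) (hab : a ≤ b) (hbc : b ≤ c) :
    le1 a b := by
  rw [le1_iff_forall_sat] at *
  exact ⟨hab, fun φ hφ hb => h.2 φ hφ (hb.mono hbc)⟩

theorem le1_of_isSuccLimit {a l : Ordinal} (hl : Order.IsSuccLimit l)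
    (h : ∀ b < l, ∃ c, b ≤ c ∧ c < l ∧ le1 a c) : le1 a l := by
  obtain ⟨c₀, -, hc₀l, hac₀⟩ := h 0 hl.pos
  refine le1_iff_forall_sat.2 ⟨hac₀.le.trans hc₀l.le, fun φ hφ ⟨v, hv, hφv⟩ => ?_⟩
  -- only the variables `≤ φ.maxVar` matter, so the witness can be moved below some `c < l`
  set N := φ.maxVar
  set b := (Finset.range (N + 1)).sup fun n => Order.succ (v n)
  have hb : b < l := (Finset.sup_lt_iff hl.bot_lt).2 fun n _ => hl.succ_lt (hv n)
  obtain ⟨c, hbc, hcl, hac⟩ := h b hb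
  have hvc : ∀ n ≤ N, v n < c := fun n hn =>
    (Order.lt_succ (v n)).trans_le <| (Finset.le_sup (f := fun n => Order.succ (v n))
      (Finset.mem_range.2 (Nat.lt_succ_of_le hn))).trans hbc
  have hφv' : φ.eval le1 (fun n => v (min n N)) :=
    (QF.eval_congr_var fun n hn => by rw [min_eq_left hn]).2 hφv
  exact (le1_iff_forall_sat.1 hac).2 φ hφ ⟨_, fun n => hvc _ (min_le_right n N), hφv'⟩

theorem le1.isSuccLimit {a b : Ordinal} (h : le1 a b) (hab : a < b) : Order.IsSuccLimit a := by
  have hreflect := (le1_iff_forall_sat.1 h).2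
  refine Ordinal.isSuccLimit_iff.2 ⟨?_, Order.isSuccPrelimit_iff_succ_lt.2 fun c hc => ?_⟩
  · rintro rfl
    obtain ⟨v, hv, -⟩ := hreflect (.ofProp True) (QF.cstBelow_ofProp _ _)
      ⟨fun _ => 0, fun _ => hab, (QF.eval_ofProp _ _ _).2 trivial⟩
    exact not_lt_zero (hv 0)
  · obtain ⟨v, hv, hcv⟩ := hreflect (.not (.le (.evar 0) (.cst c))) ⟨trivial, hc⟩
      ⟨fun _ => a, fun _ => hab, not_le.2 hc⟩
    exact (Order.succ_le_of_lt (not_le.1 hcv)).trans_lt (hv 0)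

theorem le1_iff_lt_sInf {x : Ordinal} {f : Ordinal → Ordinal} (hf : Monotone f) (hx : x ≤ f 0)
    (hS : ∃ w, ¬ le1 x (f w)) (z : Ordinal) :
    le1 x (f z) ↔ z < sInf {w | ¬ le1 x (f w)} :=
  ⟨fun hz => not_le.1 fun hle =>
      csInf_mem hS (hz.of_le_of_le (hx.trans (hf zero_le)) (hf hle)),
    fun hz => not_not.1 (notMem_of_lt_csInf' hz)⟩

section Translation

variable {α ξ η : Ordinal}

theorem lt_add_one_add_of_le {x : Ordinal} (hx : x ≤ α) (y : Ordinal) : x < α + 1 + y :=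
  (Order.lt_add_one_iff.2 hx).trans_le le_self_add

def QF.allAbove (α : Ordinal) : ℕ → QF
  | 0 => .not (.le (.evar 0) (.cst α))
  | n + 1 => .and (QF.allAbove α n) (.not (.le (.evar (n + 1)) (.cst α)))

theorem QF.eval_allAbove (r : Ordinal → Ordinal → Prop) (v : ℕ → Ordinal) :
    ∀ N, (QF.allAbove α N).eval r v ↔ ∀ n ≤ N, α < v n
  | 0 => by simp [QF.allAbove, QF.eval, Trm.val]
  | N + 1 => by
    simp [QF.allAbove, QF.eval, Trm.val, QF.eval_allAbove r v N, Nat.le_succ_iff, or_imp,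
      forall_and]

theorem QF.cstBelow_allAbove {δ : Ordinal} (h : α < δ) : ∀ N, (QF.allAbove α N).CstBelow δ
  | 0 => ⟨trivial, h⟩
  | N + 1 => ⟨QF.cstBelow_allAbove h N, trivial, h⟩

theorem le1_of_add_le1_add (IH : ∀ b < η, ∀ a, le1 a b ↔ le1 (α + 1 + a) (α + 1 + b))
    (h : le1 (α + 1 + ξ) (α + 1 + η)) : le1 ξ η := by
  have hξη : ξ ≤ η := (add_le_add_iff_left _).1 h.le
  refine le1_iff_forall_sat.2 ⟨hξη, fun φ hφ ⟨v, hv, hφv⟩ => ?_⟩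
  have hf : StrictMono (α + 1 + ·) := fun _ _ hab => (add_lt_add_iff_left _).2 hab
  have hr : ∀ a < η, ∀ b < η, (le1 (α + 1 + a) (α + 1 + b) ↔ le1 a b) :=
    fun a _ b hb => (IH b hb a).symm
  set ψ := φ.mapCst (α + 1 + ·)
  -- the conjunct `allAbove` keeps the reflected witness inside the range of `(α + 1 + ·)`
  have hψ : (ψ.and (QF.allAbove α ψ.maxVar)).CstBelow (α + 1 + ξ) :=
    ⟨hφ.mapCst fun _ hc => hf hc, QF.cstBelow_allAbove (lt_add_one_add_of_le le_rfl ξ) _⟩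
  have hψη : Sat le1 (α + 1 + η) (ψ.and (QF.allAbove α ψ.maxVar)) :=
    ⟨_, fun n => hf (hv n), (QF.eval_mapCst hf hr hv (hφ.mono hξη)).2 hφv,
      (QF.eval_allAbove _ _ _).2 fun n _ => lt_add_one_add_of_le le_rfl _⟩
  obtain ⟨w, hw, hψw, hwα⟩ := (le1_iff_forall_sat.1 h).2 _ hψ hψη
  rw [QF.eval_allAbove] at hwα
  have hξ : 0 < ξ := pos_iff_ne_zero.2 fun hξ0 =>
    (hwα 0 (Nat.zero_le _)).not_ge (Order.lt_add_one_iff.1 (by simpa [hξ0] using hw 0))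
  have hu : ∀ n, w n - (α + 1) < ξ := fun n => sub_lt_of_lt_add (hw n) hξ
  have hwu : ∀ n ≤ ψ.maxVar, α + 1 + (w n - (α + 1)) = w n :=
    fun n hn => Ordinal.add_sub_cancel_of_le (Order.add_one_le_of_lt (hwα n hn))
  refine ⟨_, hu, (QF.eval_mapCst hf hr (fun n => (hu n).trans_le hξη) (hφ.mono hξη)).1 ?_⟩
  exact (QF.eval_congr_var hwu).2 hψw

def splice (α : Ordinal) (v z : ℕ → Ordinal) (n : ℕ) : Ordinal :=
  if v n ≤ α then v n else α + 1 + z n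

def Trm.unshift (α : Ordinal) (t : Trm) : Trm :=
  t.mapCst (· - (α + 1))

theorem Trm.val_splice_of_le {v z : ℕ → Ordinal} {t : Trm} (ht : t.val v ≤ α) :
    t.val (splice α v z) = t.val v := by
  cases t with
  | evar n => exact if_pos ht
  | cst c => rfl

theorem Trm.val_splice_of_lt {v z : ℕ → Ordinal} {t : Trm} (ht : α < t.val v) :
    t.val (splice α v z) = α + 1 + (t.unshift α).val z := by
  cases t with
  | evar n => exact if_neg ht.not_ge
  | cst c => exact (Ordinal.add_sub_cancel_of_le (Order.add_one_le_of_lt ht)).symm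

theorem Trm.CstBelow.unshift (hξ : 0 < ξ) {t : Trm} (ht : t.CstBelow (α + 1 + ξ)) :
    (t.unshift α).CstBelow ξ :=
  ht.mapCst fun _ hc => sub_lt_of_lt_add hc hξ

open Classical in
def leAtom (α : Ordinal) (v : ℕ → Ordinal) (s t : Trm) : QF :=
  if s.val v ≤ α ∨ t.val v ≤ α then .ofProp (s.val v ≤ t.val v)
  else .le (s.unshift α) (t.unshift α)

open Classical in
def crossAtom (α ξ x : Ordinal) (t : Trm) : QF :=
  if ∀ w < ξ, le1 x (α + 1 + w) then .ofProp True
  else .not (.le (.cst (sInf {w | ¬ le1 x (α + 1 + w)})) t)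

open Classical in
def le1Atom (α ξ : Ordinal) (v : ℕ → Ordinal) (s t : Trm) : QF :=
  if t.val v ≤ α then .ofProp (le1 (s.val v) (t.val v))
  else if s.val v ≤ α then crossAtom α ξ (s.val v) (t.unshift α)
  else .le1 (s.unshift α) (t.unshift α)

def QF.untranslate (α ξ : Ordinal) (v : ℕ → Ordinal) (φ : QF) : QF :=
  φ.mapAtoms (leAtom α v) (le1Atom α ξ v)

theorem eval_leAtom (r : Ordinal → Ordinal → Prop) (v z : ℕ → Ordinal) (s t : Trm) :
    (leAtom α v s t).eval r z ↔ s.val (splice α v z) ≤ t.val (splice α v z) := by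
  unfold leAtom
  split_ifs with h
  · rw [QF.eval_ofProp]
    rcases le_or_gt (s.val v) α with hs | hs <;> rcases le_or_gt (t.val v) α with ht | ht
    · rw [Trm.val_splice_of_le hs, Trm.val_splice_of_le ht]
    · rw [Trm.val_splice_of_le hs, Trm.val_splice_of_lt ht]
      exact iff_of_true (hs.trans ht.le) (lt_add_one_add_of_le hs _).le
    · rw [Trm.val_splice_of_lt hs, Trm.val_splice_of_le ht]
      exact iff_of_false (ht.trans_lt hs).not_ge (lt_add_one_add_of_le ht _).not_ge
    · exact absurd h (by simp [hs, ht])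
  · push Not at h
    rw [Trm.val_splice_of_lt h.1, Trm.val_splice_of_lt h.2]
    exact (add_le_add_iff_left _).symm

theorem le1_add_of_forall_lt (hξ : Order.IsSuccLimit ξ) (hξη : le1 ξ η)
    (IH : ∀ b < η, le1 ξ b → le1 (α + 1 + ξ) (α + 1 + b)) {x z : Ordinal}
    (h : ∀ w < ξ, le1 x (α + 1 + w)) (hz : z < η) : le1 x (α + 1 + z) := by
  obtain hzξ | hξz := lt_or_ge z ξ
  · exact h z hzξ
  have hxξ : le1 x (α + 1 + ξ) := by
    refine le1_of_isSuccLimit (Ordinal.isSuccLimit_add _ hξ) fun b hb => ?_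
    have hbξ := sub_lt_of_lt_add hb hξ.pos
    exact ⟨_, Ordinal.le_add_sub b (α + 1), (add_lt_add_iff_left _).2 hbξ, h _ hbξ⟩
  exact hxξ.trans (IH z hz (hξη.of_le_of_le hξz hz.le))

theorem eval_crossAtom (hξ : Order.IsSuccLimit ξ) (hξη : le1 ξ η)
    (IH : ∀ b < η, le1 ξ b → le1 (α + 1 + ξ) (α + 1 + b)) {x : Ordinal} (hx : x ≤ α)
    {z : ℕ → Ordinal} {t : Trm} (ht : t.val z < η) :
    (crossAtom α ξ x t).eval le1 z ↔ le1 x (α + 1 + t.val z) := by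
  unfold crossAtom
  split_ifs with hall
  · rw [QF.eval_ofProp]
    exact iff_of_true trivial (le1_add_of_forall_lt hξ hξη IH hall ht)
  · push Not at hall
    obtain ⟨w, -, hw⟩ := hall
    have hmono : Monotone (α + 1 + ·) := fun _ _ h => (add_le_add_iff_left _).2 h
    exact not_le.trans (le1_iff_lt_sInf hmono (lt_add_one_add_of_le hx 0).le ⟨w, hw⟩ _).symm

theorem eval_le1Atom (hξ : Order.IsSuccLimit ξ) (hξη : le1 ξ η)
    (IH : ∀ b < η, ∀ a, le1 a b ↔ le1 (α + 1 + a) (α + 1 + b)) {v z : ℕ → Ordinal}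
    (hz : ∀ n, z n < η) {s t : Trm} (ht : t.CstBelow (α + 1 + ξ)) :
    (le1Atom α ξ v s t).eval le1 z ↔ le1 (s.val (splice α v z)) (t.val (splice α v z)) := by
  have hlt : ∀ {u : Trm}, u.CstBelow (α + 1 + ξ) → (u.unshift α).val z < η :=
    fun hu => Trm.val_lt hz ((hu.unshift hξ.pos).mono hξη.le)
  unfold le1Atom
  split_ifs with ht' hs'
  · rw [QF.eval_ofProp, Trm.val_splice_of_le ht']
    rcases le_or_gt (s.val v) α with hs' | hs'
    · rw [Trm.val_splice_of_le hs']
    · rw [Trm.val_splice_of_lt hs']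
      exact iff_of_false (fun h => (h.le.trans ht').not_gt hs')
        (fun h => (h.le.trans ht').not_gt (lt_add_one_add_of_le le_rfl _))
  · rw [Trm.val_splice_of_le hs', Trm.val_splice_of_lt (not_le.1 ht')]
    exact eval_crossAtom hξ hξη (fun b hb => (IH b hb ξ).1) hs' (hlt ht)
  · rw [Trm.val_splice_of_lt (not_le.1 hs'), Trm.val_splice_of_lt (not_le.1 ht')]
    exact IH _ (hlt ht) _

theorem eval_untranslate (hξ : Order.IsSuccLimit ξ) (hξη : le1 ξ η)
    (IH : ∀ b < η, ∀ a, le1 a b ↔ le1 (α + 1 + a) (α + 1 + b)) {v z : ℕ → Ordinal}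
    (hz : ∀ n, z n < η) {φ : QF} (hφ : φ.CstBelow (α + 1 + ξ)) :
    (φ.untranslate α ξ v).eval le1 z ↔ φ.eval le1 (splice α v z) :=
  QF.eval_mapAtoms (fun s t _ _ => eval_leAtom _ _ _ s t)
    (fun _ _ _ ht => eval_le1Atom hξ hξη IH hz ht) hφ

theorem QF.CstBelow.untranslate (hξ : 0 < ξ) (v : ℕ → Ordinal) {φ : QF}
    (hφ : φ.CstBelow (α + 1 + ξ)) : (φ.untranslate α ξ v).CstBelow ξ := by
  refine hφ.mapAtoms (fun s t hs ht => ?_) (fun s t hs ht => ?_)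
  · unfold leAtom
    split_ifs
    exacts [QF.cstBelow_ofProp _ _, ⟨hs.unshift hξ, ht.unshift hξ⟩]
  · unfold le1Atom crossAtom
    split_ifs with _ _ hall
    · exact QF.cstBelow_ofProp _ _
    · exact QF.cstBelow_ofProp _ _
    · push Not at hall
      obtain ⟨w, hwξ, hw⟩ := hall
      exact ⟨(csInf_le' hw).trans_lt hwξ, ht.unshift hξ⟩
    · exact ⟨hs.unshift hξ, ht.unshift hξ⟩

theorem add_le1_add_of_le1 (IH : ∀ b < η, ∀ a, le1 a b ↔ le1 (α + 1 + a) (α + 1 + b))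
    (h : le1 ξ η) : le1 (α + 1 + ξ) (α + 1 + η) := by
  rcases h.le.eq_or_lt with rfl | hξη
  · exact le1_refl _
  have hξ := h.isSuccLimit hξη
  refine le1_iff_forall_sat.2 ⟨(add_le_add_iff_left _).2 h.le, fun φ hφ ⟨v, hv, hφv⟩ => ?_⟩
  have hu : ∀ n, v n - (α + 1) < η := fun n => sub_lt_of_lt_add (hv n) (hξ.pos.trans hξη)
  have hvu : splice α v (fun n => v n - (α + 1)) = v := funext fun n => by
    unfold splice
    split_ifs with hn
    · rfl
    · exact Ordinal.add_sub_cancel_of_le (Order.add_one_le_of_lt (not_le.1 hn))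
  obtain ⟨u, hu', hφu⟩ := (le1_iff_forall_sat.1 h).2 _ (hφ.untranslate hξ.pos v)
    ⟨_, hu, (eval_untranslate hξ h IH hu hφ).2 (by rwa [hvu])⟩
  refine ⟨splice α v u, fun n => ?_,
    (eval_untranslate hξ h IH (fun n => (hu' n).trans hξη) hφ).1 hφu⟩
  unfold splice
  split_ifs with hn
  · exact lt_add_one_add_of_le hn _
  · exact (add_lt_add_iff_left _).2 (hu' n)

end Translation

end R1

/-- In `R₁`, the class of all ordinals is isomorphic to `[α+1, ∞)` via
translation. -/
theorem translation_iso (α ξ η : Ordinal) :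
    R1.le1 ξ η ↔ R1.le1 (α + 1 + ξ) (α + 1 + η) := by
  induction η using WellFoundedLT.induction generalizing ξ with
  | _ η IH => exact ⟨R1.add_le1_add_of_le1 IH, R1.le1_of_add_le1_add IH⟩

end
end
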